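/- Suppose L : V → ℝ is linear and T : V → ℝ is superlinear (positively homogeneous and superadditive). If there exists η ∈ V with L(η) ≤ 1/2 and T(η) = ε > 0, and for every ξ with L(ξ) < 0 one has T(ξ) ≤ 0, then for every ξ with L(ξ) = -1 one has T(ξ) ≤ -ε. -/
import Mathlib

/-- If `L` is linear and `T` is superlinear (positively homogeneous and superadditive),
`η` satisfies `L η ≤ 1/2` and `T η = ε > 0`, and `L ξ < 0 → T ξ ≤ 0` for all `ξ`,
then `L ξ = -1 → T ξ ≤ -ε`. -/
theorem stmt2 {V : Type*} [AddCommGroup V] [Module ℝ V]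
    (L : V →ₗ[ℝ] ℝ) (T : V → ℝ)
    (hhom : ∀ (a : ℝ), 0 ≤ a → ∀ ξ : V, T (a • ξ) = a * T ξ)
    (hsup : ∀ ξ η : V, T ξ + T η ≤ T (ξ + η))
    (ε : ℝ) (hε : 0 < ε) (η : V) (hLη : L η ≤ 1 / 2) (hTη : T η = ε)
    (hcrit : ∀ ξ : V, L ξ < 0 → T ξ ≤ 0) :
    ∀ ξ : V, L ξ = -1 → T ξ ≤ -ε := by
  intro ξ hLξ
  have hL : L (ξ + η) < 0 := by
    rw [map_add, hLξ]; linarith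
  have h1 : T (ξ + η) ≤ 0 := hcrit _ hL
  have h2 := hsup ξ η
  rw [hTη] at h2
  linarith
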